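/- arXiv:math/0605615 — 3 statements merged into one kernel-verified Lean document; each statement's English description precedes it below -/
import Mathlib

section
/- Let t ∈ ℤ₊^r, let M_{A,t} = {±m₁,…,±m_g} be a Markov subbasis for t, and let G := {x^{m_i⁺} − x^{m_i⁻} : i = 1,…,g}. Suppose G has the following three properties: (1) G is a lex Gröbner basis, with ordering x₁ > x₂ > ⋯ > x_d on indeterminates, for the ideal I_{M_{A,t}} that it generates; (2) for each i = 1,…,d, every element of G lying in ℚ[x_i,…,x_d] is square-free in x_i; and (3) (I_{M_{A,t}} : x_i^∞) ∩ ℚ[x_{i+1},…,x_d] ⊆ I_{M_{A,t}} for each i = 1,…,d−1. Then the polytope A⁻¹[t] has the sequential interval property. -/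
open Matrix MvPolynomial

namespace SIS

variable {r d : ℕ}

/-- The integer matrix obtained from a nonnegative-integer matrix. -/
def intMat (A : Matrix (Fin r) (Fin d) ℕ) : Matrix (Fin r) (Fin d) ℤ :=
  fun i j => (A i j : ℤ)

/-- The rational matrix obtained from a nonnegative-integer matrix. -/
def ratMat (A : Matrix (Fin r) (Fin d) ℕ) : Matrix (Fin r) (Fin d) ℚ :=
  fun i j => (A i j : ℚ)

def natToInt (v : Fin d → ℕ) : Fin d → ℤ := fun i => (v i : ℤ)

/-- `A⁻¹[t]`: nonnegative integer tables with constraint value `t`. -/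
def tables (A : Matrix (Fin r) (Fin d) ℕ) (t : Fin r → ℕ) : Set (Fin d → ℕ) :=
  {n | A.mulVec n = t}

/-- `A_ℚ⁻¹[t]`: nonnegative rational points with constraint value `t`. -/
def ratTables (A : Matrix (Fin r) (Fin d) ℕ) (t : Fin r → ℕ) : Set (Fin d → ℚ) :=
  {q | (∀ i, 0 ≤ q i) ∧ (ratMat A).mulVec q = fun i => (t i : ℚ)}

/-- ker_ℤ(A). -/
def kerZ (A : Matrix (Fin r) (Fin d) ℕ) : Set (Fin d → ℤ) :=
  {m | (intMat A).mulVec m = 0}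

/-- The some nonempty subset of the rows of `A` sums to a strictly positive vector. -/
def RowsPos (A : Matrix (Fin r) (Fin d) ℕ) : Prop :=
  ∃ R : Finset (Fin r), R.Nonempty ∧ ∀ j, 0 < ∑ i ∈ R, A i j

/-- `u` and `v` are connected using moves from `M`, staying componentwise nonnegative. -/
def connects (M : Set (Fin d → ℤ)) (u v : Fin d → ℕ) : Prop :=
  ∃ l : List (Fin d → ℤ), (∀ m ∈ l, m ∈ M) ∧
    natToInt u = natToInt v + l.sum ∧
    ∀ k, k ≤ l.length → ∀ i, 0 ≤ natToInt v i + (l.take k).sum i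

/-- A Markov basis for `A`. -/
def IsMarkovBasis (A : Matrix (Fin r) (Fin d) ℕ) (M : Set (Fin d → ℤ)) : Prop :=
  M.Finite ∧ M ⊆ kerZ A ∧
    ∀ u v : Fin d → ℕ, A.mulVec u = A.mulVec v → connects M u v

/-- A Markov subbasis for `A` and the fixed value `t`. -/
def IsMarkovSubbasis (A : Matrix (Fin r) (Fin d) ℕ) (t : Fin r → ℕ)
    (M : Set (Fin d → ℤ)) : Prop :=
  M.Finite ∧ M ⊆ kerZ A ∧ ∀ u ∈ tables A t, ∀ v ∈ tables A t, connects M u v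

/-- A set of (nonnegative) integers is an interval of integers. -/
def IsIntInterval (S : Set ℕ) : Prop :=
  ∀ a ∈ S, ∀ b ∈ S, ∀ c : ℕ, a ≤ c → c ≤ b → c ∈ S

/-- The set of feasible values of cell `i` given that cells `j < i` are fixed to `w j`;
this is the set `π₁(A_{i}⁻¹[t - Σ_{j<i} w_j a_j])` of the paper. -/
def stepSet (A : Matrix (Fin r) (Fin d) ℕ) (t : Fin r → ℕ) (i : Fin d)
    (w : Fin d → ℕ) : Set ℕ :=
  {c | ∃ n ∈ tables A t, (∀ j, j < i → n j = w j) ∧ n i = c}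

/-- The sequential interval property for `A⁻¹[t]`. -/
def SeqIntervalProperty (A : Matrix (Fin r) (Fin d) ℕ) (t : Fin r → ℕ) : Prop :=
  ∀ i : Fin d, ∀ w : Fin d → ℕ, IsIntInterval (stepSet A t i w)

/-- m⁺. -/
def posPart (m : Fin d → ℤ) : Fin d → ℕ := fun i => (m i).toNat

/-- m⁻. -/
def negPart (m : Fin d → ℤ) : Fin d → ℕ := fun i => (-(m i)).toNat

/-- The monomial `x^ν`. -/
noncomputable def monom (ν : Fin d → ℕ) : MvPolynomial (Fin d) ℚ :=
  MvPolynomial.monomial (Finsupp.equivFunOnFinite.symm ν) 1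

/-- The binomial `x^{m⁺} - x^{m⁻}` of a Markov move `m`. -/
noncomputable def moveBinomial (m : Fin d → ℤ) : MvPolynomial (Fin d) ℚ :=
  monom (posPart m) - monom (negPart m)

/-- The toric ideal `I_A`. -/
noncomputable def toricIdeal (A : Matrix (Fin r) (Fin d) ℕ) : Ideal (MvPolynomial (Fin d) ℚ) :=
  Ideal.span {f | ∃ u v : Fin d → ℕ, A.mulVec u = A.mulVec v ∧ f = monom u - monom v}

/-- Lexicographic order on exponent vectors with `x₁ > x₂ > ⋯ > x_d`:
`μ <lex ν` iff the first nonzero entry of `ν - μ` is positive. -/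
def lexLt (μ ν : Fin d →₀ ℕ) : Prop :=
  ∃ i : Fin d, μ i < ν i ∧ ∀ j, j < i → μ j = ν j

/-- `ν` is the lex-leading exponent of `p`. -/
def IsLexLead (p : MvPolynomial (Fin d) ℚ) (ν : Fin d →₀ ℕ) : Prop :=
  ν ∈ p.support ∧ ∀ μ ∈ p.support, μ ≠ ν → lexLt μ ν

/-- `x^νg` divides `x^νf`. -/
def expDivides (νg νf : Fin d →₀ ℕ) : Prop := ∀ i, νg i ≤ νf i

/-- `G` is a lex Gröbner basis for `I` (ordering `x₁ > x₂ > ⋯ > x_d`). -/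
def IsLexGB (G : Set (MvPolynomial (Fin d) ℚ)) (I : Ideal (MvPolynomial (Fin d) ℚ)) : Prop :=
  G.Finite ∧ (∀ g ∈ G, g ≠ 0 ∧ g ∈ I) ∧
    ∀ f ∈ I, f ≠ 0 → ∃ g ∈ G, ∃ νg νf,
      IsLexLead g νg ∧ IsLexLead f νf ∧ expDivides νg νf

/-- Graded reverse lexicographic order with `x_d > x_{d-1} > ⋯ > x₁`:
`μ <grevlex ν` iff deg μ < deg ν, or degrees agree and the first nonzero entry of
`ν - μ` (scanning coordinates `1, 2, …, d`) is negative. -/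
def grevlexLt (μ ν : Fin d →₀ ℕ) : Prop :=
  (∑ i, μ i) < (∑ i, ν i) ∨
    ((∑ i, μ i) = (∑ i, ν i) ∧ ∃ i : Fin d, ν i < μ i ∧ ∀ j, j < i → μ j = ν j)

/-- `ν` is the grevlex-leading exponent of `p`. -/
def IsGrevlexLead (p : MvPolynomial (Fin d) ℚ) (ν : Fin d →₀ ℕ) : Prop :=
  ν ∈ p.support ∧ ∀ μ ∈ p.support, μ ≠ ν → grevlexLt μ ν

/-- `G` is a grevlex Gröbner basis for `I` (ordering `x_d > ⋯ > x₁`). -/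
def IsGrevlexGB (G : Set (MvPolynomial (Fin d) ℚ)) (I : Ideal (MvPolynomial (Fin d) ℚ)) : Prop :=
  G.Finite ∧ (∀ g ∈ G, g ≠ 0 ∧ g ∈ I) ∧
    ∀ f ∈ I, f ≠ 0 → ∃ g ∈ G, ∃ νg νf,
      IsGrevlexLead g νg ∧ IsGrevlexLead f νf ∧ expDivides νg νf

/-- `p` is square-free in `x_i`. -/
def SquareFreeIn (p : MvPolynomial (Fin d) ℚ) (i : Fin d) : Prop :=
  ∀ ν ∈ p.support, ν i ≤ 1

/-- `p` lies in `ℚ[x_i, …, x_d]`. -/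
def OnlyVarsFrom (p : MvPolynomial (Fin d) ℚ) (i : Fin d) : Prop :=
  ∀ ν ∈ p.support, ∀ j, j < i → ν j = 0

/-- The toric ideal `I_{A_j}` of the submatrix of the last columns, viewed inside
`ℚ[x₁, …, x_d]`. -/
noncomputable def toricIdealFrom (A : Matrix (Fin r) (Fin d) ℕ) (j : Fin d) :
    Ideal (MvPolynomial (Fin d) ℚ) :=
  Ideal.span {f | ∃ u v : Fin d → ℕ, (∀ k, k < j → u k = 0) ∧ (∀ k, k < j → v k = 0) ∧
    A.mulVec u = A.mulVec v ∧ f = monom u - monom v}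

/-!
Fix the entries before position `i` and let `u, v ∈ A⁻¹[t]` share them, with `u_i < v_i`.
Since the moves connect `u` and `v`, `x^u - x^v ∈ I`, and the saturation hypothesis cancels the
common prefix monomial, so `x^{u'} - x^{v'} ∈ I` for the tails `u', v'` (entries from `i` on).
Its lex-leading monomial `x^{v'}` is divisible by the leading monomial `x^{n⁺}` of a move `n`;
then `n` vanishes before `i`, and square-freeness forces `n_i ∈ {0, 1}`. Replacing `v` by `v - n`
either lowers `v_i` by exactly one, or keeps it and lowers `v'` lexicographically, so well-founded
descent reaches a table with the same prefix and `i`-th entry `v_i - 1`. A set of naturals that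
contains `b - 1` whenever it contains some `a < b` is an interval.
-/

open Finsupp (equivFunOnFinite)

variable {A : Matrix (Fin r) (Fin d) ℕ} {t : Fin r → ℕ} {I : Ideal (MvPolynomial (Fin d) ℚ)}
  {M : Set (Fin d → ℤ)} {u v z : Fin d → ℕ} {n : Fin d → ℤ}

theorem natToInt_injective : Function.Injective (natToInt : (Fin d → ℕ) → Fin d → ℤ) :=
  fun _ _ h => funext fun k => by simpa [natToInt] using congrFun h k

theorem intMat_mulVec_natToInt (A : Matrix (Fin r) (Fin d) ℕ) (x : Fin d → ℕ) :
    intMat A *ᵥ natToInt x = natToInt (A *ᵥ x) := by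
  funext i
  simp [Matrix.mulVec, dotProduct, intMat, natToInt]

theorem mulVec_eq_of_natToInt_eq_add (hn : n ∈ kerZ A) (h : natToInt u = natToInt v + n) :
    A *ᵥ u = A *ᵥ v := by
  apply natToInt_injective
  have hn : intMat A *ᵥ n = 0 := hn
  rw [← intMat_mulVec_natToInt, ← intMat_mulVec_natToInt, h, Matrix.mulVec_add, hn, add_zero]

theorem monom_add (a b : Fin d → ℕ) : monom (a + b) = monom a * monom b := by
  have h : equivFunOnFinite.symm (a + b) = equivFunOnFinite.symm a + equivFunOnFinite.symm b := by
    ext k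
    simp
  rw [monom, monom, monom, monomial_mul, one_mul, h]

theorem support_monom_sub_subset (u v : Fin d → ℕ) :
    (monom u - monom v).support ⊆ {equivFunOnFinite.symm u, equivFunOnFinite.symm v} := by
  intro μ hμ
  rcases Finset.mem_union.1 (support_sub _ _ _ hμ) with h | h <;>
    simp [Finset.mem_singleton.1 (support_monomial_subset h)]

theorem mem_support_monom_sub (h : u ≠ v) :
    equivFunOnFinite.symm u ∈ (monom u - monom v).support := by
  have hne : equivFunOnFinite.symm v ≠ equivFunOnFinite.symm u :=
    fun h' => h (equivFunOnFinite.symm.injective h').symm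
  simp [mem_support_iff, monom, coeff_sub, coeff_monomial, hne]

theorem monom_sub_ne_zero (h : u ≠ v) : monom u - monom v ≠ 0 :=
  fun h0 => by simpa [h0] using mem_support_monom_sub h

theorem negPart_neg (n : Fin d → ℤ) : negPart (-n) = posPart n := by
  funext k
  simp [negPart, posPart]

theorem moveBinomial_neg (n : Fin d → ℤ) : moveBinomial (-n) = -moveBinomial n := by
  rw [moveBinomial, moveBinomial, negPart_neg, neg_sub]
  rfl

theorem monom_sub_eq_mul_moveBinomial (h : natToInt u = natToInt v + n) :
    monom u - monom v = monom (v - negPart n) * moveBinomial n := by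
  have hu : u = v - negPart n + posPart n := funext fun k => by
    have := congrFun h k
    simp only [natToInt, Pi.add_apply, Pi.sub_apply, posPart, negPart] at this ⊢
    omega
  have hv : v = v - negPart n + negPart n := funext fun k => by
    have := congrFun h k
    simp only [natToInt, Pi.add_apply, Pi.sub_apply, negPart] at this ⊢
    omega
  rw [moveBinomial, mul_sub, ← monom_add, ← monom_add, ← hu, ← hv]

theorem monom_sub_mem_of_moveBinomial_mem (hn : moveBinomial n ∈ I)
    (h : natToInt u = natToInt v + n) : monom u - monom v ∈ I :=
  monom_sub_eq_mul_moveBinomial h ▸ I.mul_mem_left _ hn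

theorem monom_sub_mem_of_connects (hMI : ∀ n ∈ M, moveBinomial n ∈ I) (h : connects M u v) :
    monom u - monom v ∈ I := by
  obtain ⟨l, hlM, hsum, hnn⟩ := h
  induction l generalizing v with
  | nil =>
    rw [natToInt_injective (by simpa using hsum : natToInt u = natToInt v), sub_self]
    exact I.zero_mem
  | cons n l ih =>
    set v' : Fin d → ℕ := fun k => (natToInt v k + n k).toNat
    have hv' : natToInt v' = natToInt v + n :=
      funext fun k => Int.toNat_of_nonneg (by simpa using hnn 1 (by simp) k)
    have hv'u : monom u - monom v' ∈ I := by
      refine ih (fun x hx => hlM x (List.mem_cons_of_mem _ hx)) ?_ fun k hk i => ?_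
      · rw [hsum, hv', List.sum_cons, add_assoc]
      · simpa [hv', add_assoc] using hnn (k + 1) (by simpa using hk) i
    have hvv' := monom_sub_mem_of_moveBinomial_mem (hMI n (hlM n List.mem_cons_self)) hv'
    simpa using I.add_mem hv'u hvv'

theorem lexLt_iff (μ ν : Fin d →₀ ℕ) : lexLt μ ν ↔ toLex ⇑μ < toLex ⇑ν :=
  ⟨fun ⟨i, hlt, heq⟩ => ⟨i, heq, hlt⟩, fun ⟨i, heq, hlt⟩ => ⟨i, hlt, heq⟩⟩

theorem IsLexLead.unique {p : MvPolynomial (Fin d) ℚ} {ν₁ ν₂ : Fin d →₀ ℕ}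
    (h₁ : IsLexLead p ν₁) (h₂ : IsLexLead p ν₂) : ν₁ = ν₂ := by
  by_contra hne
  have h₁₂ := (lexLt_iff _ _).1 (h₂.2 ν₁ h₁.1 hne)
  exact ((lexLt_iff _ _).1 (h₁.2 ν₂ h₂.1 (Ne.symm hne))).not_gt h₁₂

theorem isLexLead_neg_iff {p : MvPolynomial (Fin d) ℚ} {ν : Fin d →₀ ℕ} :
    IsLexLead (-p) ν ↔ IsLexLead p ν := by
  simp only [IsLexLead, support_neg]

theorem isLexLead_monom_sub (h : toLex v < toLex u) :
    IsLexLead (monom u - monom v) (equivFunOnFinite.symm u) := by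
  have hne : u ≠ v := fun huv => h.ne' (congrArg toLex huv)
  refine ⟨mem_support_monom_sub hne, fun μ hμ hμu => ?_⟩
  rcases Finset.mem_insert.1 (support_monom_sub_subset u v hμ) with rfl | hμv
  · exact absurd rfl hμu
  · rw [Finset.mem_singleton.1 hμv, lexLt_iff]
    simpa using h

theorem exists_move_of_isLexGB {G : Set (MvPolynomial (Fin d) ℚ)}
    (hGM : ∀ p ∈ G, ∃ n ∈ M, p = moveBinomial n) (hMneg : ∀ n ∈ M, -n ∈ M)
    (hGB : IsLexGB G I) (hf : monom u - monom z ∈ I) (hlt : toLex u < toLex z) :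
    ∃ n ∈ M, toLex (negPart n) < toLex (posPart n) ∧ posPart n ≤ z := by
  obtain ⟨g, hgG, νg, νf, hg, hf', hdvd⟩ :=
    hGB.2.2 _ hf (monom_sub_ne_zero fun h => hlt.ne (congrArg toLex h))
  have hνf : νf = equivFunOnFinite.symm z :=
    hf'.unique (by simpa [neg_sub] using isLexLead_neg_iff.2 (isLexLead_monom_sub hlt))
  obtain ⟨n, hnM, rfl⟩ := hGM g hgG
  have hle : ∀ a, νg = equivFunOnFinite.symm a → a ≤ z := fun a ha k => by
    simpa [ha, hνf] using hdvd k
  rcases lt_trichotomy (toLex (negPart n)) (toLex (posPart n)) with h | h | h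
  · exact ⟨n, hnM, h, hle _ (hg.unique (isLexLead_monom_sub h))⟩
  · exact absurd (by rw [moveBinomial, toLex.injective h, sub_self]) (hGB.2.1 _ hgG).1
  · refine ⟨-n, hMneg n hnM, by rwa [negPart_neg], hle _ ?_⟩
    rw [moveBinomial, ← neg_sub, isLexLead_neg_iff] at hg
    exact hg.unique (isLexLead_monom_sub h)

def LexReducibleBy (I : Ideal (MvPolynomial (Fin d) ℚ)) (M : Set (Fin d → ℤ)) : Prop :=
  ∀ u z : Fin d → ℕ, monom u - monom z ∈ I → toLex u < toLex z →
    ∃ n ∈ M, toLex (negPart n) < toLex (posPart n) ∧ posPart n ≤ z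

def VanishesBelow (i : Fin d) (x : Fin d → ℕ) : Prop := ∀ j < i, x j = 0

theorem VanishesBelow.of_toLex_lt {i : Fin d} {a b : Fin d → ℕ} (hb : VanishesBelow i b)
    (h : toLex a < toLex b) : VanishesBelow i a ∧ a i ≤ b i := by
  obtain ⟨i₀, heq, hlt⟩ := h
  have hi : i ≤ i₀ := not_lt.1 fun h' => by simp [hb i₀ h'] at hlt
  refine ⟨fun j hj => (heq j (hj.trans_le hi)).trans (hb j hj), ?_⟩
  rcases hi.eq_or_lt with rfl | hi
  · exact hlt.le
  · exact (heq i hi).le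

theorem exists_reduction_step (hMker : M ⊆ kerZ A) (hMI : ∀ n ∈ M, moveBinomial n ∈ I)
    (hred : LexReducibleBy I M)
    (hsq : ∀ n ∈ M, ∀ i, OnlyVarsFrom (moveBinomial n) i → SquareFreeIn (moveBinomial n) i)
    {i : Fin d} (hu : VanishesBelow i u) (hz : VanishesBelow i z)
    (hmem : monom u - monom z ∈ I) (hlt : u i < z i) :
    ∃ z', VanishesBelow i z' ∧ A *ᵥ z' = A *ᵥ z ∧ monom u - monom z' ∈ I ∧
      toLex z' < toLex z ∧ (z' i = z i ∨ z' i + 1 = z i) := by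
  have huz : toLex u < toLex z := ⟨i, fun j hj => (hu j hj).trans (hz j hj).symm, hlt⟩
  obtain ⟨n, hnM, hlex, hle⟩ := hred u z hmem huz
  have hpos : VanishesBelow i (posPart n) := fun j hj => Nat.le_zero.1 (hz j hj ▸ hle j)
  obtain ⟨hneg, hni⟩ := hpos.of_toLex_lt hlex
  have hpos_le_one : posPart n i ≤ 1 := by
    have hne : posPart n ≠ negPart n := fun h => hlex.ne (congrArg toLex h.symm)
    have hvars : OnlyVarsFrom (moveBinomial n) i := fun ν hν j hj => by
      rcases Finset.mem_insert.1 (support_monom_sub_subset _ _ hν) with rfl | hν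
      · simpa using hpos j hj
      · simpa [Finset.mem_singleton.1 hν] using hneg j hj
    simpa using hsq n hnM i hvars _ (mem_support_monom_sub hne)
  set z' := z - posPart n + negPart n
  have hz'n : natToInt z = natToInt z' + n := funext fun k => by
    have : posPart n k ≤ z k := hle k
    simp only [z', natToInt, Pi.add_apply, Pi.sub_apply, posPart, negPart] at this ⊢
    omega
  have hz'_add : z' + posPart n = z + negPart n := funext fun k => by
    have : posPart n k ≤ z k := hle k
    simp only [z', Pi.add_apply, Pi.sub_apply]
    omega
  refine ⟨z', fun j hj => ?_, (mulVec_eq_of_natToInt_eq_add (hMker hnM) hz'n).symm, ?_, ?_, ?_⟩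
  · simp [z', hz j hj, hpos j hj, hneg j hj]
  · simpa using I.add_mem hmem (monom_sub_mem_of_moveBinomial_mem (hMI n hnM) hz'n)
  · have : toLex z' + toLex (posPart n) < toLex z + toLex (posPart n) :=
      (congrArg toLex hz'_add).trans_lt (add_lt_add_right hlex _)
    exact lt_of_add_lt_add_right this
  · have : posPart n i ≤ z i := hle i
    simp only [z', Pi.add_apply, Pi.sub_apply]
    omega

theorem exists_pred_of_monom_sub_mem (hMker : M ⊆ kerZ A) (hMI : ∀ n ∈ M, moveBinomial n ∈ I)
    (hred : LexReducibleBy I M)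
    (hsq : ∀ n ∈ M, ∀ i, OnlyVarsFrom (moveBinomial n) i → SquareFreeIn (moveBinomial n) i)
    {i : Fin d} (hu : VanishesBelow i u) (hz : VanishesBelow i z)
    (hmem : monom u - monom z ∈ I) (hlt : u i < z i) :
    ∃ z', VanishesBelow i z' ∧ A *ᵥ z' = A *ᵥ z ∧ z' i + 1 = z i := by
  induction z using
    WellFounded.induction (InvImage.wf (toLex : (Fin d → ℕ) → Lex _) wellFounded_lt) with
  | h z ih =>
    obtain ⟨z', hz', hAz, hmem', hlt', hz'i | hz'i⟩ :=
      exists_reduction_step hMker hMI hred hsq hu hz hmem hlt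
    · obtain ⟨z'', hz'', hAz', hz''i⟩ := ih z' hlt' hz' hmem' (hz'i ▸ hlt)
      exact ⟨z'', hz'', hAz'.trans hAz, hz''i.trans hz'i⟩
    · exact ⟨z', hz', hAz, hz'i⟩

def IsPrefixSaturated (I : Ideal (MvPolynomial (Fin d) ℚ)) : Prop :=
  ∀ i : Fin d, (i : ℕ) < d - 1 → ∀ p : MvPolynomial (Fin d) ℚ,
    (∃ k : ℕ, X i ^ k * p ∈ I) → (∀ ν ∈ p.support, ∀ j : Fin d, j ≤ i → ν j = 0) → p ∈ I

def zeroBelow (N : ℕ) (x : Fin d → ℕ) : Fin d → ℕ := fun k => if (k : ℕ) < N then 0 else x k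

theorem monom_zeroBelow {N : ℕ} (hN : N < d) (x : Fin d → ℕ) :
    monom (zeroBelow N x) = X ⟨N, hN⟩ ^ x ⟨N, hN⟩ * monom (zeroBelow (N + 1) x) := by
  have hsplit : zeroBelow N x = Pi.single ⟨N, hN⟩ (x ⟨N, hN⟩) + zeroBelow (N + 1) x := by
    funext k
    by_cases hk : k = ⟨N, hN⟩
    · subst hk
      simp [zeroBelow]
    · have hkN : (k : ℕ) ≠ N := fun h => hk (Fin.ext h)
      simp only [zeroBelow, Pi.add_apply, Pi.single_apply, hk, if_false, zero_add]
      split_ifs <;> omega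
  rw [hsplit, monom_add, monom, X_pow_eq_monomial, Finsupp.equivFunOnFinite_symm_single]

theorem monom_zeroBelow_sub_mem
    (hsat : IsPrefixSaturated I)
    {i : Fin d} (hagree : ∀ j < i, u j = v j) (h : monom u - monom v ∈ I) :
    monom (zeroBelow i u) - monom (zeroBelow i v) ∈ I := by
  suffices ∀ N ≤ (i : ℕ), monom (zeroBelow N u) - monom (zeroBelow N v) ∈ I from this i le_rfl
  intro N hN
  induction N with
  | zero =>
    have hzero (x : Fin d → ℕ) : zeroBelow 0 x = x := funext fun k => if_neg (Nat.not_lt_zero k)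
    rwa [hzero, hzero]
  | succ N ih =>
    have hNd : N < d := by omega
    refine hsat ⟨N, hNd⟩ (show N < d - 1 by omega) _ ⟨u ⟨N, hNd⟩, ?_⟩ fun ν hν j hj => ?_
    · rw [mul_sub, ← monom_zeroBelow, hagree ⟨N, hNd⟩ (Fin.lt_def.2 hN), ← monom_zeroBelow]
      exact ih (by omega)
    · have hjN : (j : ℕ) < N + 1 := Nat.lt_succ_of_le (Fin.le_def.1 hj)
      rcases Finset.mem_insert.1 (support_monom_sub_subset _ _ hν) with rfl | hν
      · simp [zeroBelow, hjN]
      · simp [Finset.mem_singleton.1 hν, zeroBelow, hjN]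

theorem pred_mem_stepSet (hI : ∀ u ∈ tables A t, ∀ v ∈ tables A t, monom u - monom v ∈ I)
    (hsat : IsPrefixSaturated I)
    (hMker : M ⊆ kerZ A) (hMI : ∀ n ∈ M, moveBinomial n ∈ I) (hred : LexReducibleBy I M)
    (hsq : ∀ n ∈ M, ∀ i, OnlyVarsFrom (moveBinomial n) i → SquareFreeIn (moveBinomial n) i)
    {i : Fin d} {w : Fin d → ℕ} {a b : ℕ} (ha : a ∈ stepSet A t i w) (hb : b ∈ stepSet A t i w)
    (hab : a < b) : b - 1 ∈ stepSet A t i w := by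
  obtain ⟨u, hu, huw, rfl⟩ := ha
  obtain ⟨v, hv, hvw, rfl⟩ := hb
  have hvanish (x : Fin d → ℕ) : VanishesBelow i (zeroBelow i x) := fun _ hj => if_pos hj
  obtain ⟨z, hz, hAz, hzi⟩ := exists_pred_of_monom_sub_mem hMker hMI hred hsq
    (hvanish u) (hvanish v)
    (monom_zeroBelow_sub_mem hsat (fun j hj => (huw j hj).trans (hvw j hj).symm) (hI u hu v hv))
    (by simpa [zeroBelow] using hab)
  have hsplit : v = (v - zeroBelow i v) + zeroBelow i v := funext fun k => by
    simp only [zeroBelow, Pi.add_apply, Pi.sub_apply]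
    split_ifs <;> omega
  refine ⟨v - zeroBelow i v + z, ?_, fun j hj => ?_, ?_⟩
  · change A *ᵥ _ = t
    rw [Matrix.mulVec_add, hAz, ← Matrix.mulVec_add, ← hsplit]
    exact hv
  · simp [zeroBelow, hz j hj, Fin.lt_def.1 hj, hvw j hj]
  · simp only [Pi.add_apply, Pi.sub_apply, zeroBelow, lt_irrefl, if_false] at hzi ⊢
    omega

theorem isIntInterval_of_pred_mem {S : Set ℕ} (h : ∀ a ∈ S, ∀ b ∈ S, a < b → b - 1 ∈ S) :
    IsIntInterval S := by
  intro a ha b hb c hac hcb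
  obtain ⟨k, rfl⟩ := Nat.exists_eq_add_of_le hcb
  induction k with
  | zero => simpa using hb
  | succ k ih => exact ih (by simpa using h a ha _ hb (by omega)) (by omega)

theorem seqInterval_of_markovSubbasis_general {r d : ℕ}
    (A : Matrix (Fin r) (Fin d) ℕ) (t : Fin r → ℕ)
    (g : ℕ) (m : Fin g → (Fin d → ℤ))
    (hsub : IsMarkovSubbasis A t {v | ∃ i, v = m i ∨ v = -(m i)})
    (G : Set (MvPolynomial (Fin d) ℚ))
    (hGdef : G = {p | ∃ i : Fin g, p = moveBinomial (m i)})
    (hGB : IsLexGB G (Ideal.span G))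
    (hsq : ∀ p ∈ G, ∀ i : Fin d, OnlyVarsFrom p i → SquareFreeIn p i)
    (hsat : ∀ i : Fin d, (i : ℕ) < d - 1 → ∀ p : MvPolynomial (Fin d) ℚ,
      (∃ k : ℕ, (X i) ^ k * p ∈ Ideal.span G) →
      (∀ ν ∈ p.support, ∀ j : Fin d, j ≤ i → ν j = 0) →
      p ∈ Ideal.span G) :
    SeqIntervalProperty A t := by
  set M : Set (Fin d → ℤ) := {v | ∃ i, v = m i ∨ v = -(m i)}
  have hMG : ∀ n ∈ M, moveBinomial n ∈ G ∨ -moveBinomial n ∈ G := by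
    rintro n ⟨j, rfl | rfl⟩
    · exact .inl (hGdef ▸ ⟨j, rfl⟩)
    · exact .inr (by rw [moveBinomial_neg, neg_neg, hGdef]; exact ⟨j, rfl⟩)
  have hMI : ∀ n ∈ M, moveBinomial n ∈ Ideal.span G := fun n hn => (hMG n hn).elim
    (Ideal.subset_span ·) fun h => neg_neg (moveBinomial n) ▸ neg_mem (Ideal.subset_span h)
  have hsqM : ∀ n ∈ M, ∀ i, OnlyVarsFrom (moveBinomial n) i → SquareFreeIn (moveBinomial n) i :=
    fun n hn i => (hMG n hn).elim (hsq _ · i)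
      fun h => by simpa only [OnlyVarsFrom, SquareFreeIn, support_neg] using hsq _ h i
  have hred : LexReducibleBy (Ideal.span G) M := by
    refine fun u z hf hlt => exists_move_of_isLexGB ?_ ?_ hGB hf hlt
    · rw [hGdef]
      rintro p ⟨j, rfl⟩
      exact ⟨m j, ⟨j, .inl rfl⟩, rfl⟩
    · rintro n ⟨j, rfl | rfl⟩ <;> exact ⟨j, by simp⟩
  have hI u (hu : u ∈ tables A t) v (hv : v ∈ tables A t) :=
    monom_sub_mem_of_connects hMI (hsub.2.2 u hu v hv)
  exact fun i w => isIntInterval_of_pred_mem fun a ha b hb hab =>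
    pred_mem_stepSet hI hsat hsub.2.1 hMI hred hsqM ha hb hab

/-- Proposition 4.1. Suppose `M_{A,t} = {±m₁, …, ±m_g}` is a
Markov subbasis such that `G = {x^{m_i⁺} - x^{m_i⁻}}` (1) is a lex Gröbner basis
for the ideal `I_{M_{A,t}}` it generates, (2) the elements of `G` lying in
`ℚ[x_i, …, x_d]` are square-free in `x_i` for each `i`, and (3)
`(I_{M_{A,t}} : x_i^∞) ∩ ℚ[x_{i+1}, …, x_d] ⊆ I_{M_{A,t}}` for `i = 1, …, d-1`.
Then `A⁻¹[t]` has the sequential interval property. -/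
theorem seqInterval_of_markovSubbasis {r d : ℕ}
    (A : Matrix (Fin r) (Fin d) ℕ) (hA : RowsPos A) (t : Fin r → ℕ)
    (g : ℕ) (m : Fin g → (Fin d → ℤ))
    (hsub : IsMarkovSubbasis A t {v | ∃ i, v = m i ∨ v = -(m i)})
    (G : Set (MvPolynomial (Fin d) ℚ))
    (hGdef : G = {p | ∃ i : Fin g, p = moveBinomial (m i)})
    (hGB : IsLexGB G (Ideal.span G))
    (hsq : ∀ p ∈ G, ∀ i : Fin d, OnlyVarsFrom p i → SquareFreeIn p i)
    (hsat : ∀ i : Fin d, (i : ℕ) < d - 1 → ∀ p : MvPolynomial (Fin d) ℚ,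
      (∃ k : ℕ, (X i) ^ k * p ∈ Ideal.span G) →
      (∀ ν ∈ p.support, ∀ j : Fin d, j ≤ i → ν j = 0) →
      p ∈ Ideal.span G) :
    SeqIntervalProperty A t :=
  seqInterval_of_markovSubbasis_general A t g m hsub G hGdef hGB hsq hsat

end SIS
end

section
/- If a lex Gröbner basis for the toric ideal I_A with ordering x₁ > x₂ > ⋯ > x_d has square-free exponents on all of its leading monomials, then for every t ∈ ℤ₊^r, every n ∈ A⁻¹[t], and every j = 1,…,d, the integer-programming and linear-programming lower bounds agree: l_j(t_j) = L_j(t_j), where t₁ = t and t_j = t − a₁n₁ − ⋯ − a_{j−1}n_{j−1} for j = 2,…,d. -/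
open Matrix MvPolynomial

namespace SIS

variable {r d : ℕ}

section AuxLowerBound

variable {r d : ℕ}

private lemma lexLt_asymm' {a b : Fin d →₀ ℕ} (h1 : lexLt a b) (h2 : lexLt b a) : False := by
  obtain ⟨i, hi, hpre⟩ := h1
  obtain ⟨i', hi', hpre'⟩ := h2
  rcases lt_trichotomy i i' with h | h | h
  · have := hpre' i h; omega
  · subst h; omega
  · have := hpre i' h; omega

/-- The monomial algebra map `x_k ↦ ∏ i, y_i ^ A i k`. -/
private noncomputable def fibHom (A : Matrix (Fin r) (Fin d) ℕ) :
    MvPolynomial (Fin d) ℚ →ₐ[ℚ] MvPolynomial (Fin r) ℚ :=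
  aeval (fun k => ∏ i, (X i : MvPolynomial (Fin r) ℚ) ^ A i k)

private lemma fibHom_monomial (A : Matrix (Fin r) (Fin d) ℕ) (ν : Fin d →₀ ℕ) (a : ℚ) :
    fibHom A (monomial ν a)
      = monomial (Finsupp.equivFunOnFinite.symm (A.mulVec ⇑ν)) a := by
  rw [fibHom, aeval_monomial, Finsupp.prod_fintype _ _ (fun _ => pow_zero _)]
  rw [monomial_eq, Finsupp.prod_fintype _ _ (fun _ => pow_zero _)]
  have h1 : ∀ k, (∏ i, (X i : MvPolynomial (Fin r) ℚ) ^ A i k) ^ ν k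
      = ∏ i, (X i : MvPolynomial (Fin r) ℚ) ^ (A i k * ν k) := by
    intro k
    rw [← Finset.prod_pow]
    exact Finset.prod_congr rfl fun i _ => by rw [pow_mul]
  simp_rw [h1]
  rw [Finset.prod_comm, MvPolynomial.algebraMap_eq]
  have h2 : ∀ i : Fin r, ∏ k, (X i : MvPolynomial (Fin r) ℚ) ^ (A i k * ν k)
      = (X i : MvPolynomial (Fin r) ℚ) ^ (Finsupp.equivFunOnFinite.symm (A.mulVec ⇑ν)) i := by
    intro i
    rw [Finset.prod_pow_eq_pow_sum]
    congr 1
  simp_rw [h2]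

private lemma coeff_fibHom (A : Matrix (Fin r) (Fin d) ℕ) (f : MvPolynomial (Fin d) ℚ)
    (c : Fin r → ℕ) :
    coeff (Finsupp.equivFunOnFinite.symm c) (fibHom A f)
      = ∑ ν ∈ f.support, if A.mulVec ⇑ν = c then coeff ν f else 0 := by
  classical
  conv_lhs => rw [f.as_sum, map_sum, coeff_sum]
  refine Finset.sum_congr rfl fun ν _ => ?_
  rw [fibHom_monomial, coeff_monomial]
  by_cases h : A.mulVec ⇑ν = c
  · rw [if_pos h, if_pos (by rw [h])]
  · rw [if_neg h, if_neg fun hc => h (Finsupp.equivFunOnFinite.symm.injective hc)]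

private lemma fibHom_vanishes {A : Matrix (Fin r) (Fin d) ℕ}
    {g : MvPolynomial (Fin d) ℚ} (hg : g ∈ toricIdeal A) : fibHom A g = 0 := by
  have hle : toricIdeal A ≤ RingHom.ker (fibHom A).toRingHom := by
    rw [toricIdeal, Ideal.span_le]
    rintro f ⟨u, v, huv, rfl⟩
    have h1 : (fibHom A).toRingHom (monom u - monom v) = 0 := by
      rw [map_sub]
      show fibHom A (monom u) - fibHom A (monom v) = 0
      rw [monom, monom, fibHom_monomial, fibHom_monomial]
      rw [sub_eq_zero]
      have hcoe : ∀ x : Fin d → ℕ, ⇑(Finsupp.equivFunOnFinite.symm x) = x := fun x => by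
        funext k; simp
      rw [hcoe, hcoe, huv]
    exact h1
  exact hle hg

/-- Any exponent in the support of an element of the toric ideal has another
member of the support in the same fiber. -/
private lemma exists_fiber_partner {A : Matrix (Fin r) (Fin d) ℕ}
    {g : MvPolynomial (Fin d) ℚ} (hg : g ∈ toricIdeal A)
    {ν : Fin d →₀ ℕ} (hν : ν ∈ g.support) :
    ∃ μ ∈ g.support, μ ≠ ν ∧ A.mulVec ⇑μ = A.mulVec ⇑ν := by
  classical
  by_contra hcon
  push_neg at hcon
  have h0 : coeff (Finsupp.equivFunOnFinite.symm (A.mulVec ⇑ν)) (fibHom A g) = 0 := by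
    rw [fibHom_vanishes hg]; simp
  rw [coeff_fibHom] at h0
  have hsingle : ∑ μ ∈ g.support, (if A.mulVec ⇑μ = A.mulVec ⇑ν then coeff μ g else 0)
      = coeff ν g := by
    rw [Finset.sum_eq_single ν]
    · rw [if_pos rfl]
    · intro μ hμ hne
      exact if_neg (hcon μ hμ hne)
    · intro h; exact absurd hν h
  rw [hsingle] at h0
  exact (MvPolynomial.mem_support_iff.mp hν) h0

private lemma cast_mulVec (A : Matrix (Fin r) (Fin d) ℕ) (v : Fin d → ℕ) (i : Fin r) :
    ((A.mulVec v i : ℕ) : ℚ) = (ratMat A).mulVec (fun k => (v k : ℚ)) i := by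
  simp [Matrix.mulVec, dotProduct, ratMat]

end AuxLowerBound

/-- Corollary 5.1, lower bounds. If a lex Gröbner basis for
`I_A` (ordering `x₁ > x₂ > ⋯ > x_d`) has square-free exponents on its leading
monomials, then the IP and LP lower bounds agree at every step `j` of the
sequential sampling of any `n ∈ A⁻¹[t]`: `l_j(t_j) = L_j(t_j)`. -/
theorem ip_eq_lp_lowerBounds_of_squarefree_lexGB {r d : ℕ}
    (A : Matrix (Fin r) (Fin d) ℕ) (hA : RowsPos A)
    (G : Set (MvPolynomial (Fin d) ℚ)) (hGB : IsLexGB G (toricIdeal A))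
    (hsf : ∀ g ∈ G, ∀ ν, IsLexLead g ν → ∀ i, ν i ≤ 1)
    (t : Fin r → ℕ) (n : Fin d → ℕ) (hn : n ∈ tables A t) (j : Fin d) :
    ∃ m₀ ∈ tables A t, (∀ k, k < j → m₀ k = n k) ∧
      ∀ q ∈ ratTables A t, (∀ k, k < j → q k = (n k : ℚ)) →
        (m₀ j : ℚ) ≤ q j := by
  classical
  set npre : Fin d → ℕ := fun k => if k < j then n k else 0 with hnpre
  set nsuf : Fin d → ℕ := fun k => if k < j then 0 else n k with hnsuf
  set b : Fin r → ℕ := A.mulVec nsuf with hb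
  set S : Set (Fin d → ℕ) := {m | (∀ k, k < j → m k = 0) ∧ A.mulVec m = b} with hSdef
  have hnsufS : nsuf ∈ S := ⟨fun k hk => if_pos hk, rfl⟩
  -- pick the lex-minimal element of the fiber `S`
  have hwf : WellFounded (Pi.Lex ((· < ·) : Fin d → Fin d → Prop)
      (fun {_ : Fin d} => ((· < ·) : ℕ → ℕ → Prop))) :=
    Pi.Lex.wellFounded (ι := Fin d) (α := fun _ => ℕ) (· < ·) fun _ => wellFounded_lt
  obtain ⟨u, huS, humin⟩ := hwf.has_min S ⟨nsuf, hnsufS⟩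
  obtain ⟨hu0, hub⟩ := huS
  have hnsplit : npre + nsuf = n := by
    funext k; by_cases hk : k < j <;> simp [npre, nsuf, hk]
  refine ⟨fun k => if k < j then n k else u k, ?_, fun k hk => if_pos hk, ?_⟩
  · show A.mulVec _ = t
    have h1 : (fun k => if k < j then n k else u k) = npre + u := by
      funext k
      by_cases hk : k < j
      · simp [npre, hk, hu0 k hk]
      · simp [npre, hk]
    rw [h1, Matrix.mulVec_add, hub, hb, ← Matrix.mulVec_add, hnsplit]
    exact hn
  · intro q hq hqpre
    obtain ⟨hq0, hqA⟩ := hq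
    have hj0 : (fun k => if k < j then n k else u k) j = u j := if_neg (lt_irrefl j)
    rw [hj0]
    by_contra hlt
    push_neg at hlt
    -- the zeroed-out rational point
    set q' : Fin d → ℚ := fun k => if k < j then 0 else q k with hq'
    have hq'0 : ∀ k, 0 ≤ q' k := by
      intro k; by_cases hk : k < j <;> simp [q', hk, hq0 k]
    have hq'A : (ratMat A).mulVec q' = fun i => (b i : ℚ) := by
      have hsplitq : q = (fun k => ((npre k : ℕ) : ℚ)) + q' := by
        funext k
        by_cases hk : k < j
        · simp [npre, q', hk, hqpre k hk]
        · simp [npre, q', hk]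
      funext i
      have h2 := congrFun hqA i
      rw [hsplitq, Matrix.mulVec_add] at h2
      have h3 : (ratMat A).mulVec (fun k => ((npre k : ℕ) : ℚ)) i
          = ((A.mulVec npre i : ℕ) : ℚ) := (cast_mulVec A npre i).symm
      have h4 : ((A.mulVec npre i : ℕ) : ℚ) + ((b i : ℕ) : ℚ) = ((t i : ℕ) : ℚ) := by
        have : A.mulVec npre i + b i = t i := by
          have hsum' : A.mulVec npre + A.mulVec nsuf = t := by
            rw [← Matrix.mulVec_add, hnsplit]; exact hn
          rw [hb]
          simpa using congrFun hsum' i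
        exact_mod_cast congrArg (fun x : ℕ => (x : ℚ)) this
      have h5 := congrFun hqA i
      simp only [Pi.add_apply] at h2
      rw [h3] at h2
      linarith [h2, h4]
    have hq'j : q' j = q j := if_neg (lt_irrefl j)
    -- clear denominators
    set N : ℕ := ∏ k, (q' k).den with hN
    have hNpos : 0 < N := Finset.prod_pos fun k _ => (q' k).pos
    have hint : ∀ k, ∃ m : ℕ, (m : ℚ) = (N : ℚ) * q' k := by
      intro k
      obtain ⟨c, hc⟩ := Finset.dvd_prod_of_mem (fun k => (q' k).den) (Finset.mem_univ k)
      refine ⟨c * (q' k).num.toNat, ?_⟩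
      have hnum : ((q' k).num : ℚ) = q' k * ((q' k).den : ℚ) := by
        have hden : ((q' k).den : ℚ) ≠ 0 := by
          exact_mod_cast (q' k).den_nz
        have h := Rat.num_div_den (q' k)
        rw [div_eq_iff hden] at h
        exact h
      have hnn : 0 ≤ (q' k).num := Rat.num_nonneg.mpr (hq'0 k)
      have ht : (((q' k).num.toNat : ℕ) : ℚ) = ((q' k).num : ℚ) := by
        exact_mod_cast Int.toNat_of_nonneg hnn
      have hNC : (N : ℚ) = ((q' k).den : ℚ) * (c : ℚ) := by
        rw [hN]; exact_mod_cast hc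
      push_cast
      rw [ht, hnum, hNC]
      ring
    choose w hw using hint
    have hwpre : ∀ k, k < j → w k = 0 := by
      intro k hk
      have : (w k : ℚ) = 0 := by rw [hw k]; simp [q', hk]
      exact_mod_cast this
    have hwA : A.mulVec w = fun i => N * b i := by
      funext i
      have : ((A.mulVec w i : ℕ) : ℚ) = ((N * b i : ℕ) : ℚ) := by
        rw [cast_mulVec]
        have : (ratMat A).mulVec (fun k => (w k : ℚ)) i
            = (N : ℚ) * ((ratMat A).mulVec q' i) := by
          simp only [Matrix.mulVec, dotProduct]
          rw [Finset.mul_sum]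
          refine Finset.sum_congr rfl fun k _ => ?_
          rw [hw k]; ring
        rw [this, hq'A]
        push_cast
        ring
      exact_mod_cast this
    set Nu : Fin d → ℕ := fun k => N * u k with hNu
    have hNuA : A.mulVec Nu = fun i => N * b i := by
      funext i
      simp only [Matrix.mulVec, dotProduct, Nu, Finset.mul_sum]
      rw [← congrFun hub i]
      simp only [Matrix.mulVec, dotProduct, Finset.mul_sum]
      exact Finset.sum_congr rfl fun k _ => by ring
    have hwj : w j < Nu j := by
      have h1 : (w j : ℚ) < ((Nu j : ℕ) : ℚ) := by
        rw [hw j, hq'j]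
        have : ((Nu j : ℕ) : ℚ) = (N : ℚ) * (u j : ℚ) := by push_cast [Nu]; ring
        rw [this]
        have hNQ : (0 : ℚ) < (N : ℚ) := by exact_mod_cast hNpos
        exact mul_lt_mul_of_pos_left hlt hNQ
      exact_mod_cast h1
    -- the binomial x^{Nu} - x^w lies in the toric ideal
    set f : MvPolynomial (Fin d) ℚ := monom Nu - monom w with hf
    have hfI : f ∈ toricIdeal A :=
      Ideal.subset_span ⟨Nu, w, by rw [hNuA, hwA], rfl⟩
    set eNu : Fin d →₀ ℕ := Finsupp.equivFunOnFinite.symm Nu with heNu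
    set ew : Fin d →₀ ℕ := Finsupp.equivFunOnFinite.symm w with hew
    have hNuw : Nu ≠ w := fun h => absurd (congrFun h j) (by omega)
    have heNuw : eNu ≠ ew := fun h => hNuw (Finsupp.equivFunOnFinite.symm.injective h)
    have hcoefff : ∀ μ, coeff μ f = (if eNu = μ then (1:ℚ) else 0) - (if ew = μ then (1:ℚ) else 0) := by
      intro μ
      rw [hf, monom, monom, coeff_sub, coeff_monomial, coeff_monomial]
    have hfNu : coeff eNu f = 1 := by
      rw [hcoefff eNu, if_pos rfl, if_neg (fun h => heNuw h.symm)]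
      norm_num
    have hfne : f ≠ 0 := fun h => by simp [h] at hfNu
    have hsupf : ∀ μ ∈ f.support, μ = eNu ∨ μ = ew := by
      intro μ hμ
      have := MvPolynomial.mem_support_iff.mp hμ
      rw [hcoefff μ] at this
      by_cases h1 : eNu = μ
      · exact Or.inl h1.symm
      · by_cases h2 : ew = μ
        · exact Or.inr h2.symm
        · rw [if_neg h1, if_neg h2] at this; norm_num at this
    have heNuk : ∀ k, eNu k = Nu k := fun k => by
      rw [heNu]; rfl
    have hewk : ∀ k, ew k = w k := fun k => by
      rw [hew]; rfl
    have hflead : IsLexLead f eNu := by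
      constructor
      · rw [MvPolynomial.mem_support_iff, hfNu]; norm_num
      · intro μ hμ hne
        rcases hsupf μ hμ with h | h
        · exact absurd h hne
        · subst h
          refine ⟨j, ?_, ?_⟩
          · rw [hewk, heNuk]; exact hwj
          · intro k hk
            rw [hewk, heNuk, hwpre k hk, hNu]
            simp [hu0 k hk]
    obtain ⟨g, hgG, νg, νf, hglead, hflead', hdvd⟩ := hGB.2.2 f hfI hfne
    have hνf : νf = eNu := by
      by_contra hne
      exact lexLt_asymm' (hflead.2 νf hflead'.1 hne)
        (hflead'.2 eNu hflead.1 (fun h => hne h.symm))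
    subst hνf
    have hsq : ∀ i, νg i ≤ 1 := hsf g hgG νg hglead
    have hνgu : ∀ k, νg k ≤ u k := by
      intro k
      have h1 : νg k ≤ Nu k := by
        have := hdvd k; rwa [heNuk k] at this
      rcases Nat.eq_zero_or_pos (u k) with h | h
      · rw [h]; have : Nu k = 0 := by rw [hNu]; simp [h]
        omega
      · calc νg k ≤ 1 := hsq k
          _ ≤ u k := h
    have hνgpre : ∀ k, k < j → νg k = 0 := by
      intro k hk
      have := hνgu k
      rw [hu0 k hk] at this
      omega
    -- fiber partner of the leading exponent of g
    have hgI : g ∈ toricIdeal A := (hGB.2.1 g hgG).2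
    obtain ⟨μ, hμsup, hμne, hμfib⟩ := exists_fiber_partner hgI hglead.1
    obtain ⟨i0, hi0lt, hi0pre⟩ := hglead.2 μ hμsup hμne
    have hji0 : j ≤ i0 := by
      by_contra hc
      push_neg at hc
      have := hνgpre i0 hc
      omega
    have hμpre : ∀ k, k < j → μ k = 0 := by
      intro k hk
      have h1 := hi0pre k (lt_of_lt_of_le hk hji0)
      rw [h1]; exact hνgpre k hk
    -- the improved table u'
    set u' : Fin d → ℕ := fun k => u k - νg k + μ k with hu'
    have hu'S : u' ∈ S := by
      constructor
      · intro k hk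
        rw [hu']
        simp only
        rw [hu0 k hk, hνgpre k hk, hμpre k hk]
      · have hsum : u' + (fun k => νg k) = u + (fun k => μ k) := by
          funext k
          simp only [Pi.add_apply, hu']
          have := hνgu k
          omega
        have h2 := congrArg A.mulVec hsum
        rw [Matrix.mulVec_add, Matrix.mulVec_add] at h2
        have h3 : A.mulVec (fun k => μ k) = A.mulVec (fun k => νg k) := hμfib
        rw [h3] at h2
        funext i
        have h4 := congrFun h2 i
        simp only [Pi.add_apply] at h4
        have h5 := congrFun hub i
        omega
    have hu'lt : Pi.Lex ((· < ·) : Fin d → Fin d → Prop)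
        (fun {_ : Fin d} => ((· < ·) : ℕ → ℕ → Prop)) u' u := by
      refine ⟨i0, ?_, ?_⟩
      · intro k hk
        rw [hu']
        simp only
        rw [hi0pre k hk]
        have := hνgu k
        omega
      · rw [hu']
        simp only
        have h1 := hνgu i0
        omega
    exact humin u' hu'S hu'lt

end SIS
end

section
/- Let G be a lex Gröbner basis for the toric ideal I_A with indeterminate ordering x₁ > x₂ > ⋯ > x_d. Then for each i = 1,…,d, the set G ∩ ℚ[x_i,…,x_d] of elements of G involving only the indeterminates x_i,…,x_d is a lex Gröbner basis for the toric ideal I_{A_i} of the submatrix A_i consisting of the last d−i+1 columns of A. -/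
open Matrix MvPolynomial

namespace SIS

variable {r d : ℕ}

/-- `p` involves only the indeterminates `x_j, …, x_d`. -/
def SupportedFrom (p : MvPolynomial (Fin d) ℚ) (j : Fin d) : Prop :=
  ∀ ν ∈ p.support, ∀ k, k < j → ν k = 0

/-- `G ⊆ ℚ[x_j, …, x_d]` is a lex Gröbner basis (ordering `x_j > ⋯ > x_d`) for
the ideal `I` of `ℚ[x_j, …, x_d]`. -/
def IsLexGBFrom (G : Set (MvPolynomial (Fin d) ℚ)) (j : Fin d)
    (I : Ideal (MvPolynomial (Fin d) ℚ)) : Prop :=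
  G.Finite ∧ (∀ g ∈ G, g ≠ 0 ∧ SupportedFrom g j ∧ g ∈ I) ∧
    ∀ f ∈ I, f ≠ 0 → SupportedFrom f j →
      ∃ g ∈ G, ∃ νg νf, IsLexLead g νg ∧ IsLexLead f νf ∧ expDivides νg νf


/-! The monomial map `φ_A : x^ν ↦ t^{Aν}` kills `I_A`. Conversely, a polynomial in
`ℚ[x_i, …, x_d]` killed by `φ_A` lies in `I_{A_i}`: each of its monomials `x^ν` shares the
fibre `Aν` with another one `x^μ`, and subtracting a multiple of `x^ν - x^μ ∈ I_{A_i}`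
shrinks the support. Hence `I_A ∩ ℚ[x_i, …, x_d] ⊆ I_{A_i}`.
For the lex order, a polynomial whose leading monomial lies in `ℚ[x_i, …, x_d]` lies there
entirely, and so does every divisor of such a monomial; so a Gröbner basis element of `G`
dividing the leading monomial of `f ∈ I_{A_i} ⊆ I_A` is itself in `ℚ[x_i, …, x_d]`. -/

lemma monom_coe (ν : Fin d →₀ ℕ) : monom ⇑ν = monomial ν 1 := by
  rw [monom, Finsupp.equivFunOnFinite_symm_coe]

section ToricMap

variable (A : Matrix (Fin r) (Fin d) ℕ)

def mulVecHom : (Fin d →₀ ℕ) →+ (Fin r → ℕ) where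
  toFun ν := A *ᵥ ⇑ν
  map_zero' := by simp
  map_add' x y := by simp [Matrix.mulVec_add]

noncomputable def toricMap : MvPolynomial (Fin d) ℚ →+* AddMonoidAlgebra ℚ (Fin r → ℕ) :=
  AddMonoidAlgebra.mapDomainRingHom ℚ (mulVecHom A)

lemma toricMap_monomial (ν : Fin d →₀ ℕ) (c : ℚ) :
    toricMap A (monomial ν c) = AddMonoidAlgebra.single (A *ᵥ ⇑ν) c := by
  rw [← single_eq_monomial]
  exact AddMonoidAlgebra.mapDomain_single

lemma coeff_toricMap (p : MvPolynomial (Fin d) ℚ) (t : Fin r → ℕ) :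
    (toricMap A p).coeff t = ∑ ν ∈ p.support, if A *ᵥ ⇑ν = t then coeff ν p else 0 := by
  classical
  change Finsupp.mapDomain (fun ν : Fin d →₀ ℕ => A *ᵥ ⇑ν) (AddMonoidAlgebra.coeff p) t = _
  rw [Finsupp.mapDomain, Finsupp.sum, Finsupp.finsetSum_apply]
  exact Finset.sum_congr rfl fun ν _ => Finsupp.single_apply

lemma toricIdeal_le_ker_toricMap : toricIdeal A ≤ RingHom.ker (toricMap A) := by
  rw [toricIdeal, Ideal.span_le]
  rintro _ ⟨u, v, huv, rfl⟩
  rw [SetLike.mem_coe, RingHom.mem_ker, map_sub, monom, monom, toricMap_monomial,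
    toricMap_monomial]
  exact sub_eq_zero.2 (congrArg (AddMonoidAlgebra.single · 1) huv)

lemma exists_mem_support_ne_mulVec_eq {p : MvPolynomial (Fin d) ℚ} (hp : toricMap A p = 0)
    {ν : Fin d →₀ ℕ} (hν : ν ∈ p.support) :
    ∃ μ ∈ p.support, μ ≠ ν ∧ A *ᵥ ⇑μ = A *ᵥ ⇑ν := by
  by_contra! hfibre
  have hcoeff := coeff_toricMap A p (A *ᵥ ⇑ν)
  rw [hp, Finset.sum_eq_single ν (fun μ hμ hμν => if_neg (hfibre μ hμ hμν))
    (fun h => absurd hν h), if_pos rfl] at hcoeff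
  exact mem_support_iff.1 hν hcoeff.symm

lemma binomial_mem_toricIdealFrom {i : Fin d} {ν μ : Fin d →₀ ℕ}
    (hν : ∀ k, k < i → ν k = 0) (hμ : ∀ k, k < i → μ k = 0) (hνμ : A *ᵥ ⇑ν = A *ᵥ ⇑μ) :
    monomial ν 1 - monomial μ 1 ∈ toricIdealFrom A i :=
  Ideal.subset_span ⟨ν, μ, hν, hμ, hνμ, by rw [monom_coe, monom_coe]⟩

lemma toricIdealFrom_le_toricIdeal (i : Fin d) : toricIdealFrom A i ≤ toricIdeal A := by
  apply Ideal.span_mono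
  rintro _ ⟨u, v, -, -, huv, rfl⟩
  exact ⟨u, v, huv, rfl⟩

end ToricMap

lemma support_sub_C_mul_binomial_subset {σ R : Type*} [CommRing R] [DecidableEq σ]
    {p : MvPolynomial σ R} {ν μ : σ →₀ ℕ} (hμ : μ ∈ p.support) (hμν : μ ≠ ν) :
    (p - C (coeff ν p) * (monomial ν 1 - monomial μ 1)).support ⊆ p.support.erase ν := by
  intro κ hκ
  rw [mem_support_iff, coeff_sub, coeff_C_mul, coeff_sub, coeff_monomial, coeff_monomial] at hκ
  rcases eq_or_ne κ ν with rfl | hκν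
  · simp [hμν] at hκ
  · refine Finset.mem_erase.2 ⟨hκν, ?_⟩
    rcases eq_or_ne κ μ with rfl | hκμ
    · exact hμ
    · simpa [Ne.symm hκν, Ne.symm hκμ] using hκ

lemma mem_toricIdealFrom_of_toricMap_eq_zero (A : Matrix (Fin r) (Fin d) ℕ) {i : Fin d}
    {p : MvPolynomial (Fin d) ℚ} (hp : toricMap A p = 0) (hpi : SupportedFrom p i) :
    p ∈ toricIdealFrom A i := by
  induction hn : p.support.card using Nat.strong_induction_on generalizing p with
  | _ n ih =>
    obtain hp0 | ⟨ν, hν⟩ := p.support.eq_empty_or_nonempty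
    · rw [support_eq_empty.1 hp0]
      exact zero_mem _
    obtain ⟨μ, hμ, hμν, hfibre⟩ := exists_mem_support_ne_mulVec_eq A hp hν
    set b : MvPolynomial (Fin d) ℚ := monomial ν 1 - monomial μ 1
    have hb : b ∈ toricIdealFrom A i :=
      binomial_mem_toricIdealFrom A (hpi ν hν) (hpi μ hμ) hfibre.symm
    set q := p - C (coeff ν p) * b
    have hq_support : q.support ⊆ p.support.erase ν := support_sub_C_mul_binomial_subset hμ hμν
    have hq : q ∈ toricIdealFrom A i := by
      refine ih q.support.card ?_ (?_ : toricMap A q = 0) ?_ rfl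
      · rw [← hn, ← Finset.card_erase_add_one hν]
        exact Nat.lt_succ_of_le (Finset.card_le_card hq_support)
      · rw [map_sub, map_mul, hp, RingHom.mem_ker.1 (toricIdeal_le_ker_toricMap A
          (toricIdealFrom_le_toricIdeal A i hb)), mul_zero, sub_zero]
      · exact fun κ hκ => hpi κ (Finset.mem_of_mem_erase (hq_support hκ))
    rw [show p = q + C (coeff ν p) * b by ring]
    exact add_mem hq (Ideal.mul_mem_left _ _ hb)

lemma SupportedFrom.of_isLexLead {g : MvPolynomial (Fin d) ℚ} {ν : Fin d →₀ ℕ} {i : Fin d}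
    (hlead : IsLexLead g ν) (hν : ∀ k, k < i → ν k = 0) : SupportedFrom g i := by
  intro μ hμ k hk
  rcases eq_or_ne μ ν with rfl | hμν
  · exact hν k hk
  obtain ⟨j, hlt, heq⟩ := hlead.2 μ hμ hμν
  have hij : i ≤ j := not_lt.1 fun hji => by simp [hν j hji] at hlt
  rw [heq k (hk.trans_le hij), hν k hk]

theorem elimination_lexGB_general {r d : ℕ}
    (A : Matrix (Fin r) (Fin d) ℕ)
    (G : Set (MvPolynomial (Fin d) ℚ)) (hGB : IsLexGB G (toricIdeal A))
    (i : Fin d) :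
    IsLexGBFrom {g ∈ G | SupportedFrom g i} i (toricIdealFrom A i) := by
  obtain ⟨hfin, hmem, hlead⟩ := hGB
  refine ⟨hfin.subset (Set.sep_subset _ _), ?_, ?_⟩
  · rintro g ⟨hgG, hgi⟩
    obtain ⟨hg0, hgI⟩ := hmem g hgG
    exact ⟨hg0, hgi, mem_toricIdealFrom_of_toricMap_eq_zero A
      (toricIdeal_le_ker_toricMap A hgI) hgi⟩
  · intro f hf hf0 hfi
    obtain ⟨g, hgG, νg, νf, hgl, hfl, hdvd⟩ :=
      hlead f (toricIdealFrom_le_toricIdeal A i hf) hf0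
    have hνg : ∀ k, k < i → νg k = 0 := fun k hk =>
      Nat.eq_zero_of_le_zero (hfi νf hfl.1 k hk ▸ hdvd k)
    exact ⟨g, ⟨hgG, SupportedFrom.of_isLexLead hgl hνg⟩, νg, νf, hgl, hfl, hdvd⟩

/-- elimination. If `G` is a lex Gröbner basis for `I_A` with
`x₁ > x₂ > ⋯ > x_d`, then for each `i` the set `G ∩ ℚ[x_i, …, x_d]` is a lex
Gröbner basis for the toric ideal `I_{A_i}` of the submatrix `A_i` of the last
`d - i + 1` columns of `A`. -/
theorem elimination_lexGB {r d : ℕ}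
    (A : Matrix (Fin r) (Fin d) ℕ) (hA : RowsPos A)
    (G : Set (MvPolynomial (Fin d) ℚ)) (hGB : IsLexGB G (toricIdeal A))
    (i : Fin d) :
    IsLexGBFrom {g ∈ G | SupportedFrom g i} i (toricIdealFrom A i) :=
  elimination_lexGB_general A G hGB i

end SIS
end
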